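/- arXiv:math/9903049 — 2 statements merged into one kernel-verified Lean document; each statement's English description precedes it below -/
import Mathlib

section
/- For finite N, the group U^N(n) = {(Φ, q) ∈ U(n) × S¹ : det(Φ)² = q^N} is connected if and only if N is odd. -/
/-!
`U(n)` is path connected: a scalar `c ∈ S¹` can be chosen with `-1 ∉ σ(c • u)`, so `c • u` lies
within distance `2` of `1` and is joined to `1` inside the unitary group, while `c • u` is joined
to `u` along the circle.

For `N = 2k + 1`, every `(Φ, q) ∈ U^N(n)` is the image of `(Φ, det Φ * q⁻ᵏ)` under the continuous
map `(A, w) ↦ (A * diag(w ^ N / det A, 1, …, 1), w ^ 2)` on the connected space `U(n) × S¹`.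
For `N = 2m`, `det Φ * q⁻ᵐ` squares to `1`, so it is a continuous `±1`-valued function on
`U^N(n)` that takes both values.
-/

open Complex

lemma Circle.coe_mem_unitary (c : Circle) : (c : ℂ) ∈ unitary ℂ := by
  rw [Unitary.mem_iff_star_mul_self, Complex.star_def, Complex.conj_mul', Circle.norm_coe]
  simp

instance Circle.instNontrivial : Nontrivial Circle := ⟨⟨-1, 1, Circle.neg_ne_self 1⟩⟩

instance Circle.instInfinite : Infinite Circle := PreconnectedSpace.infinite

lemma exists_circle_neg_one_notMem_spectrum_smul {A : Type*} [Ring A] [Algebra ℂ A] {a : A}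
    (ha : (spectrum ℂ a).Finite) : ∃ c : Circle, -1 ∉ spectrum ℂ ((c : ℂ) • a) := by
  by_contra! h
  have hmem (c : Circle) : -(c : ℂ)⁻¹ ∈ spectrum ℂ a := by
    have := h c
    rw [show (c : ℂ) • a = Circle.toUnits c • a from rfl, spectrum.unit_smul_eq_smul,
      Set.mem_smul_set_iff_inv_smul_mem, Units.smul_def] at this
    simpa using this
  have : Finite (spectrum ℂ a) := ha.to_subtype
  have : Finite Circle := Finite.of_injective (fun c => (⟨_, hmem c⟩ : spectrum ℂ a)) <| by
    intro c d hcd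
    exact Circle.ext (by simpa using congrArg Subtype.val hcd)
  exact not_finite Circle

section CStar
variable {A : Type*} [CStarAlgebra A]

lemma Unitary.joined_one_of_neg_one_notMem_spectrum_smul {u : unitary A} {c : Circle}
    (hc : -1 ∉ spectrum ℂ ((c : ℂ) • (u : A))) : Joined 1 u := by
  let f : Circle → unitary A := fun z =>
    ⟨(z : ℂ) • (u : A), Unitary.smul_mem_of_mem z.coe_mem_unitary u.2⟩
  have hf : Continuous f := by fun_prop
  have h1 : Joined 1 (f c) := Unitary.joined _ _ <| by
    rw [OneMemClass.coe_one, Unitary.norm_sub_one_lt_two_iff (f c).2]; exact hc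
  have h2 : Joined (f c) (f 1) := (PathConnectedSpace.joined c 1).map hf
  have h3 : f 1 = u := by ext; simp [f]
  exact h3 ▸ h1.trans h2

end CStar

open scoped Matrix.Norms.L2Operator in
instance Matrix.UnitaryGroup.instPathConnectedSpace {ι : Type*} [Fintype ι] [DecidableEq ι] :
    PathConnectedSpace (Matrix.unitaryGroup ι ℂ) := by
  have key (u : Matrix.unitaryGroup ι ℂ) : Joined 1 u :=
    have ⟨_, hc⟩ := exists_circle_neg_one_notMem_spectrum_smul (u : Matrix ι ι ℂ).finite_spectrum
    Unitary.joined_one_of_neg_one_notMem_spectrum_smul hc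
  exact ⟨⟨1⟩, fun u v => (key u).symm.trans (key v)⟩

lemma Circle.eq_one_or_eq_neg_one_of_sq_eq_one {w : Circle} (h : w ^ 2 = 1) : w = 1 ∨ w = -1 := by
  simpa [← Circle.coe_inj] using congrArg ((↑) : Circle → ℂ) h

namespace Matrix.UnitaryGroup

variable {ι : Type*} [Fintype ι] [DecidableEq ι]

noncomputable def detCircle : unitaryGroup ι ℂ →* Circle where
  toFun A := ⟨det (A : Matrix ι ι ℂ),
    mem_sphere_zero_iff_norm.2 (CStarRing.norm_of_mem_unitary (det_of_mem_unitary A.2))⟩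
  map_one' := Circle.ext det_one
  map_mul' _ _ := Circle.ext (det_mul _ _)

@[simp]
lemma coe_detCircle (A : unitaryGroup ι ℂ) : (detCircle A : ℂ) = det (A : Matrix ι ι ℂ) := rfl

@[fun_prop]
lemma continuous_detCircle : Continuous (detCircle : unitaryGroup ι ℂ → Circle) :=
  continuous_subtype_val.matrix_det.subtype_mk _

noncomputable def diagonal : (ι → Circle) →* unitaryGroup ι ℂ where
  toFun d := ⟨Matrix.diagonal fun i => (d i : ℂ), by
    rw [mem_unitaryGroup_iff, star_eq_conjTranspose, diagonal_conjTranspose,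
      diagonal_mul_diagonal, ← diagonal_one]
    exact congrArg Matrix.diagonal <|
      funext fun i => Unitary.mul_star_self_of_mem (d i).coe_mem_unitary⟩
  map_one' := Subtype.ext diagonal_one
  map_mul' _ _ := Subtype.ext (diagonal_mul_diagonal _ _).symm

@[fun_prop]
lemma continuous_diagonal : Continuous (diagonal : (ι → Circle) → unitaryGroup ι ℂ) :=
  (continuous_pi fun i => continuous_subtype_val.comp (continuous_apply i)).matrix_diagonal
    |>.subtype_mk _

lemma detCircle_diagonal_mulSingle (i : ι) (c : Circle) :
    detCircle (diagonal (Pi.mulSingle i c)) = c := by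
  ext
  simp only [coe_detCircle, diagonal, MonoidHom.coe_mk, OneHom.coe_mk, det_diagonal]
  exact (map_prod Circle.coeHom _ _).symm.trans (by simp; rfl)

end Matrix.UnitaryGroup

open Matrix
open Matrix.UnitaryGroup (detCircle detCircle_diagonal_mulSingle continuous_diagonal)

/-- The group `U^N(n)` of the paper, with `ι = Fin n`. -/
def unitaryDetSqEqPow (ι : Type*) [Fintype ι] [DecidableEq ι] (N : ℕ) :
    Set (unitaryGroup ι ℂ × Circle) :=
  {p | det (p.1 : Matrix ι ι ℂ) ^ 2 = (p.2 : ℂ) ^ N}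

section UnitaryDetSqEqPow

variable {ι : Type*} [Fintype ι] [DecidableEq ι] {N : ℕ}

lemma mem_unitaryDetSqEqPow_iff {p : unitaryGroup ι ℂ × Circle} :
    p ∈ unitaryDetSqEqPow ι N ↔ detCircle p.1 ^ 2 = p.2 ^ N := by
  simp [unitaryDetSqEqPow, ← Circle.coe_inj]

lemma unitaryDetSqEqPow_eq_range_of_odd (i : ι) (hN : Odd N) :
    unitaryDetSqEqPow ι N = Set.range fun p : unitaryGroup ι ℂ × Circle =>
      (p.1 * UnitaryGroup.diagonal (Pi.mulSingle i (p.2 ^ N * (detCircle p.1)⁻¹)), p.2 ^ 2) := by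
  ext ⟨A, q⟩
  simp only [mem_unitaryDetSqEqPow_iff, Set.mem_range, Prod.ext_iff, Prod.exists]
  constructor
  · intro h
    obtain ⟨k, rfl⟩ := hN
    set w := detCircle A * (q ^ k)⁻¹
    have hw2 : w ^ 2 = q := by
      rw [mul_pow, h, inv_pow, ← pow_mul]
      group
    have hwN : w ^ (2 * k + 1) = detCircle A := by
      rw [pow_succ, pow_mul, hw2, mul_inv_cancel_comm_assoc]
    refine ⟨A, w, ?_, hw2⟩
    rw [hwN, mul_inv_cancel, Pi.mulSingle_one, map_one, mul_one]
  · rintro ⟨B, w, rfl, rfl⟩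
    rw [map_mul, detCircle_diagonal_mulSingle, mul_inv_cancel_comm_assoc, ← pow_mul, ← pow_mul,
      mul_comm]

lemma isConnected_unitaryDetSqEqPow_of_odd [Nonempty ι] (hN : Odd N) :
    IsConnected (unitaryDetSqEqPow ι N) := by
  rw [unitaryDetSqEqPow_eq_range_of_odd (Classical.arbitrary ι) hN]
  exact isConnected_range <| (continuous_fst.mul <| continuous_diagonal.comp <|
    (continuous_mulSingle _).comp (by fun_prop)).prodMk (by fun_prop)

lemma not_isPreconnected_unitaryDetSqEqPow_of_even [Nonempty ι] (hN : Even N) :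
    ¬ IsPreconnected (unitaryDetSqEqPow ι N) := by
  obtain ⟨m, rfl⟩ := hN
  intro h
  let g : unitaryGroup ι ℂ × Circle → Circle := fun p => detCircle p.1 * (p.2 ^ m)⁻¹
  have hg : Set.MapsTo g (unitaryDetSqEqPow ι (m + m)) {1, -1} := fun p hp => by
    rw [mem_unitaryDetSqEqPow_iff] at hp
    apply Circle.eq_one_or_eq_neg_one_of_sq_eq_one
    rw [mul_pow, hp, inv_pow, ← pow_mul, mul_two, mul_inv_cancel]
  have h1 : ((1, 1) : unitaryGroup ι ℂ × Circle) ∈ unitaryDetSqEqPow ι (m + m) := by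
    simp [mem_unitaryDetSqEqPow_iff]
  have hneg : (UnitaryGroup.diagonal (Pi.mulSingle (Classical.arbitrary ι) (-1)), 1) ∈
      unitaryDetSqEqPow ι (m + m) := by
    simp [mem_unitaryDetSqEqPow_iff, detCircle_diagonal_mulSingle]
  have hg_const := h.constant_of_mapsTo (Set.toFinite _).isDiscrete
    (by fun_prop : Continuous g).continuousOn hg h1 hneg
  exact Circle.neg_ne_self 1 (by simpa [g, detCircle_diagonal_mulSingle] using hg_const.symm)

end UnitaryDetSqEqPow

theorem stmt_4_general (n N : ℕ) (hn : 0 < n) :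
    IsConnected {p : Matrix.unitaryGroup (Fin n) ℂ × Circle |
        (Matrix.det (p.1 : Matrix (Fin n) (Fin n) ℂ)) ^ 2 = ((p.2 : ℂ)) ^ N}
      ↔ Odd N := by
  have : Nonempty (Fin n) := ⟨⟨0, hn⟩⟩
  refine ⟨fun h => ?_, isConnected_unitaryDetSqEqPow_of_odd⟩
  by_contra hodd
  exact not_isPreconnected_unitaryDetSqEqPow_of_even (Nat.not_odd_iff_even.mp hodd) h.isPreconnected

/-- For finite `N ≥ 1` and `n ≥ 1`, the group
`U^N(n) = {(Φ,q) ∈ U(n) × S¹ | det(Φ)² = q^N}` is connected if and only if `N` is odd. -/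
theorem stmt_4 (n N : ℕ) (hn : 0 < n) (hN : 0 < N) :
    IsConnected {p : Matrix.unitaryGroup (Fin n) ℂ × Circle |
        (Matrix.det (p.1 : Matrix (Fin n) (Fin n) ℂ)) ^ 2 = ((p.2 : ℂ)) ^ N}
      ↔ Odd N :=
  stmt_4_general n N hn
end

section
/- Let G be a group, τ₁, τ₂ ∈ G, and suppose a group G acts on a set S with distinguished elements and an equivalence relation ≈ (isotopy) compatible with the action (s ≈ s' implies g·s ≈ g·s' for all g ∈ G). Assume L₁, L₂ ∈ S satisfy: τ₁·L₁ = L₁, τ₂·L₂ = L₂, τ₁·L₂ ≈ τ₂⁻¹·L₁. Then (τ₁τ₂)³·L₂ ≈ L₂ and (τ₁τ₂)³·L₁ ≈ L₁. -/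
/-- Abstract braid-relation consequence: if a group `G` acts on a set `S`
with an equivalence relation `≈` compatible with the action, and `τ₁·L₁ = L₁`,
`τ₂·L₂ = L₂`, `τ₁·L₂ ≈ τ₂⁻¹·L₁`, `τ₂·L₁ ≈ τ₁⁻¹·L₂`, then `(τ₁τ₂)³·L₂ ≈ L₂` and
`(τ₁τ₂)³·L₁ ≈ L₁`. -/
theorem stmt_19 (G : Type*) [Group G] (S : Type*) [MulAction G S]
    (r : S → S → Prop) (hequiv : Equivalence r)
    (hcompat : ∀ (g : G) (s s' : S), r s s' → r (g • s) (g • s'))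
    (τ₁ τ₂ : G) (L₁ L₂ : S)
    (h1 : τ₁ • L₁ = L₁) (h2 : τ₂ • L₂ = L₂)
    (h12 : r (τ₁ • L₂) (τ₂⁻¹ • L₁)) (h21 : r (τ₂ • L₁) (τ₁⁻¹ • L₂)) :
    r ((τ₁ * τ₂) ^ 3 • L₂) L₂ ∧ r ((τ₁ * τ₂) ^ 3 • L₁) L₁ := by
  constructor
  · have A := hcompat ((τ₁ * τ₂) ^ 2) _ _ h12
    have C : r ((τ₁ * τ₂) ^ 3 • L₂) ((τ₁ * τ₂) ^ 2 • (τ₂⁻¹ • L₁)) := by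
      rw [pow_succ, mul_smul, mul_smul, h2]; exact A
    have eq2 : (τ₁ * τ₂) ^ 2 • (τ₂⁻¹ • L₁) = τ₁ • (τ₂ • L₁) := by
      have h : (τ₁ * τ₂) ^ 2 * τ₂⁻¹ = (τ₁ * τ₂) * τ₁ := by simp [pow_succ, mul_assoc]
      rw [smul_smul, h, mul_smul (τ₁ * τ₂) τ₁, h1, mul_smul]
    rw [eq2] at C
    have B := hcompat τ₁ _ _ h21
    rw [smul_inv_smul] at B
    exact hequiv.trans C B
  · have A := hcompat ((τ₁ * τ₂) ^ 2 * τ₁) _ _ h21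
    have C : r ((τ₁ * τ₂) ^ 3 • L₁) (((τ₁ * τ₂) ^ 2 * τ₁) • (τ₁⁻¹ • L₂)) := by
      have h : (τ₁ * τ₂) ^ 3 = (τ₁ * τ₂) ^ 2 * τ₁ * τ₂ := by simp [pow_succ, mul_assoc]
      rw [h, mul_smul]; exact A
    have eq2 : ((τ₁ * τ₂) ^ 2 * τ₁) • (τ₁⁻¹ • L₂) = (τ₁ * τ₂) • (τ₁ • L₂) := by
      have h : (τ₁ * τ₂) ^ 2 * τ₁ * τ₁⁻¹ = (τ₁ * τ₂) * (τ₁ * τ₂) := by simp [pow_succ, mul_assoc]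
      rw [smul_smul, h, mul_smul, mul_smul τ₁ τ₂ L₂, h2]
    rw [eq2] at C
    have B := hcompat (τ₁ * τ₂) _ _ h12
    have eq3 : (τ₁ * τ₂) • (τ₂⁻¹ • L₁) = L₁ := by
      rw [smul_smul, mul_assoc, mul_inv_cancel, mul_one, h1]
    rw [eq3] at B
    exact hequiv.trans C B
end
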